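/- Let N ≥ 1, U ≥ N, and R_1 ≥ ... ≥ R_U > 0, with R_max(h) = (1/(N-h)) ∑_{u=h+1}^U R_u for h ∈ {0,...,N-1}. If h satisfies R_{h+1} ≤ R_max(h) (with R_{U+1} := 0 when h = U) and R_h ≥ R_max(h) (vacuous when h = 0), then the resulting rate profile (R_max(h),...,R_max(h), R_{h+1},...,R_U) satisfies the constraint that every entry is at most 1/N times the sum of all entries. -/
import Mathlib


/-- Let `N ≥ 1`, `U ≥ N`, `R 1 ≥ ... ≥ R U > 0`, and
`Rmax h = (∑_{u=h+1}^U R u) / (N - h)` for `h ∈ {0,...,N-1}`. If `h` satisfies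
`R (h+1) ≤ Rmax h` (with the convention `R (U+1) = 0` when `h = U`) and
`Rmax h ≤ R h` (vacuous when `h = 0`), then the capped rate profile
`P u = Rmax h` for `u ≤ h` and `P u = R u` for `u > h` satisfies that every entry is
at most `1/N` times the sum of all `U` entries. -/
theorem capped_profile_feasible (N U : ℕ) (hN : 1 ≤ N) (hUN : N ≤ U)
    (R : ℕ → ℝ)
    (hpos : ∀ u, 1 ≤ u → u ≤ U → 0 < R u)
    (hsorted : ∀ u v, 1 ≤ u → u ≤ v → v ≤ U → R v ≤ R u)
    (h : ℕ) (hh : h < N)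
    (hup : (if h = U then 0 else R (h + 1)) ≤
      (∑ w ∈ Finset.Icc (h + 1) U, R w) / ((N : ℝ) - h))
    (hdown : 1 ≤ h →
      (∑ w ∈ Finset.Icc (h + 1) U, R w) / ((N : ℝ) - h) ≤ R h) :
    ∀ u, 1 ≤ u → u ≤ U →
      (if u ≤ h then (∑ w ∈ Finset.Icc (h + 1) U, R w) / ((N : ℝ) - h) else R u) ≤
        (1 / (N : ℝ)) * ∑ v ∈ Finset.Icc 1 U,
          (if v ≤ h then (∑ w ∈ Finset.Icc (h + 1) U, R w) / ((N : ℝ) - h)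
           else R v) := by
  intro u hu1 huU
  set S : ℝ := ∑ w ∈ Finset.Icc (h + 1) U, R w with hS
  have hhU : h < U := lt_of_lt_of_le hh hUN
  have hNh : (0:ℝ) < (N:ℝ) - h := by
    have : (h:ℝ) < N := by exact_mod_cast hh
    linarith
  have hN0 : (0:ℝ) < (N:ℝ) := by positivity
  -- compute the sum
  have hsplit : ∑ v ∈ Finset.Icc 1 U,
      (if v ≤ h then S / ((N : ℝ) - h) else R v)
      = h * (S / ((N:ℝ) - h)) + S := by
    have hunion : Finset.Icc 1 U = Finset.Icc 1 h ∪ Finset.Icc (h+1) U := by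
      ext x; simp [Finset.mem_Icc]; omega
    have hdisj : Disjoint (Finset.Icc 1 h) (Finset.Icc (h+1) U) := by
      simp [Finset.disjoint_left, Finset.mem_Icc]; omega
    rw [hunion, Finset.sum_union hdisj]
    congr 1
    · rw [Finset.sum_congr rfl (fun v hv => if_pos (Finset.mem_Icc.mp hv).2)]
      simp [Nat.card_Icc]
    · exact Finset.sum_congr rfl (fun v hv => if_neg (by
        have := (Finset.mem_Icc.mp hv).1; omega))
  rw [hsplit]
  have hRHS : (1 / (N:ℝ)) * (h * (S / ((N:ℝ) - h)) + S) = S / ((N:ℝ) - h) := by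
    field_simp
    ring
  rw [hRHS]
  by_cases hc : u ≤ h
  · rw [if_pos hc]
  · rw [if_neg hc]
    have hup' : R (h+1) ≤ S / ((N:ℝ) - h) := by
      rwa [if_neg (by omega)] at hup
    exact le_trans (hsorted (h+1) u (by omega) (by omega) huU) hup'
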